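/- Let N ≥ 4, ω_N = e^{2πi/N}, and let A be the N×N circulant matrix with entries A_{k,j} = (1 − ω_N^{j−k})/|1 − ω_N^{j−k}|³ for k ≠ j (exponent taken mod N) and A_{k,k} = 0. Then the eigenvalue λ_k = Σ_{j=1, j≠k}^{N} A_{1,j} ω_N^{(k−1)(j−1)} satisfies λ_k ≠ 0 for all k ∈ {1,...,N−1} except that λ_{(N+1)/2} = 0 when N is odd. -/

import Mathlib

/-!
Write `θ_l = π l / N`. Since `1 - ω^l = -2i sin θ_l e^{iθ_l}`, the `l`-th summand of `λ_k` is
`(sin (qθ_l) - i cos (qθ_l)) / (4 sin² θ_l)` with `q = 2k - 1`; the cosine parts cancel under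
`l ↦ N - l`, so `λ_k = S(q) / 4` with `S(q) = ∑_l sin (qθ_l) / sin² θ_l`.
Termwise `S(2N - q) = -S(q)`, hence `S(N) = 0`, and it remains to show `S(q) > 0` for odd `q < N`.
The sequence `G j = S(2j + 1)` is strictly concave: its second difference is
`-4 ∑_l sin ((2j + 3)θ_l) = -4 cot ((2j + 3)π / 2N) < 0`. As `G 0 > 0` and, at `h = ⌊N/2⌋`,
either `G h = 0` (`N` odd) or `G h = -G (h - 1)` (`N` even), the minimum principle for
concave sequences makes `G` positive on `[0, h)`.
-/

open Complex Finset Real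

lemma sin_pi_mul_div_pos {N l : ℕ} (hl : l ∈ Ico 1 N) : 0 < Real.sin (π * l / N) := by
  rw [mem_Ico] at hl
  have hN : (0 : ℝ) < N := by exact_mod_cast (zero_lt_one.trans_le hl.1).trans hl.2
  have hl0 : (0 : ℝ) < l := by exact_mod_cast hl.1
  refine sin_pos_of_pos_of_lt_pi (by positivity) ?_
  rw [div_lt_iff₀ hN, mul_lt_mul_iff_right₀ pi_pos]
  exact_mod_cast hl.2

noncomputable def sineSum (N c : ℕ) : ℝ := ∑ l ∈ Ico 1 N, Real.sin (c * (π * l / N))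

noncomputable def weightedSineSum (N q : ℕ) : ℝ :=
  ∑ l ∈ Ico 1 N, Real.sin (q * (π * l / N)) / Real.sin (π * l / N) ^ 2

/-- Telescoping `2 sin (x/2) sin (l x) = cos ((l - 1/2) x) - cos ((l + 1/2) x)`. -/
lemma two_mul_sin_half_mul_sum_sin (x : ℝ) (N : ℕ) (hN : 1 ≤ N) :
    2 * Real.sin (x / 2) * ∑ l ∈ Ico 1 N, Real.sin (l * x)
      = Real.cos (x / 2) - Real.cos ((N - 1 / 2) * x) := by
  have hstep : ∀ l : ℕ, 2 * Real.sin (x / 2) * Real.sin (l * x)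
      = -Real.cos ((((l + 1 : ℕ) : ℝ) - 1 / 2) * x) - -Real.cos (((l : ℝ) - 1 / 2) * x) := by
    intro l
    rw [sub_neg_eq_add, neg_add_eq_sub, Real.cos_sub_cos]
    push_cast
    rw [show ((l : ℝ) - 1 / 2) * x - ((l + 1) - 1 / 2) * x = -x by ring, neg_div, Real.sin_neg]
    ring_nf
  rw [mul_sum, sum_congr rfl fun l _ => hstep l,
    sum_Ico_sub (fun i : ℕ => -Real.cos ((i - 1 / 2 : ℝ) * x)) hN]
  push_cast
  ring_nf

lemma sineSum_pos {N c : ℕ} (hc : Odd c) (hcN : c < N) : 0 < sineSum N c := by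
  have hN : (0 : ℝ) < N := by exact_mod_cast hc.pos.trans hcN
  set x : ℝ := c * π / N
  have hx : 0 < x / 2 ∧ x / 2 < π / 2 := by
    have : (c : ℝ) < N := by exact_mod_cast hcN
    have : (0 : ℝ) < c := by exact_mod_cast hc.pos
    constructor
    · positivity
    · rw [div_lt_div_iff_of_pos_right two_pos, div_lt_iff₀ hN]; nlinarith [pi_pos]
  have hend : Real.cos ((N - 1 / 2) * x) = -Real.cos (x / 2) := by
    have : (N - 1 / 2) * x = c * π - x / 2 := by simp only [x]; field_simp
    rw [this, cos_nat_mul_pi_sub, hc.neg_one_pow, neg_one_mul]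
  have htelescope := two_mul_sin_half_mul_sum_sin x N (by omega)
  rw [hend, sub_neg_eq_add] at htelescope
  have hsin : 0 < Real.sin (x / 2) := sin_pos_of_pos_of_lt_pi hx.1 (by linarith [pi_pos])
  have hcos : 0 < Real.cos (x / 2) := cos_pos_of_mem_Ioo ⟨by linarith, hx.2⟩
  have hsum : sineSum N c = ∑ l ∈ Ico 1 N, Real.sin (l * x) := by
    unfold sineSum; congr! 2 with l; ring
  rw [hsum]
  nlinarith

lemma weightedSineSum_one_pos {N : ℕ} (hN : 2 ≤ N) : 0 < weightedSineSum N 1 := by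
  refine sum_pos (fun l hl => ?_) ⟨1, by simp; omega⟩
  have := sin_pi_mul_div_pos hl
  rw [Nat.cast_one, one_mul]
  positivity

/-- `sin (q θ) + sin ((q + 4) θ) = 2 sin ((q + 2) θ) cos (2 θ)` and `cos (2 θ) = 1 - 2 sin² θ`. -/
lemma weightedSineSum_add_weightedSineSum_add_four (N q : ℕ) :
    weightedSineSum N q + weightedSineSum N (q + 4)
      = 2 * weightedSineSum N (q + 2) - 4 * sineSum N (q + 2) := by
  simp only [weightedSineSum, sineSum, mul_sum, ← sum_add_distrib, ← sum_sub_distrib]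
  refine sum_congr rfl fun l hl => ?_
  have hs := (sin_pi_mul_div_pos hl).ne'
  set θ := π * l / N
  have key : Real.sin (q * θ) + Real.sin ((q + 4 : ℕ) * θ)
      = 2 * Real.sin ((q + 2 : ℕ) * θ) * (1 - 2 * Real.sin θ ^ 2) := by
    rw [Real.sin_add_sin, show (q * θ + (q + 4 : ℕ) * θ) / 2 = (q + 2 : ℕ) * θ by push_cast; ring,
      show (q * θ - (q + 4 : ℕ) * θ) / 2 = -(2 * θ) by push_cast; ring, Real.cos_neg,
      Real.cos_two_mul]
    linear_combination (4 * Real.sin ((q + 2 : ℕ) * θ)) * Real.sin_sq_add_cos_sq θ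
  rw [← add_div, key]
  field_simp
  ring

lemma weightedSineSum_two_mul_sub {N q : ℕ} (hq : q ≤ 2 * N) :
    weightedSineSum N (2 * N - q) = -weightedSineSum N q := by
  simp only [weightedSineSum, ← sum_neg_distrib, ← neg_div]
  refine sum_congr rfl fun l hl => ?_
  have hN : (N : ℝ) ≠ 0 := by
    rw [mem_Ico] at hl; exact_mod_cast (zero_lt_one.trans_le hl.1).trans hl.2 |>.ne'
  rw [Nat.cast_sub hq, show ((2 * N : ℕ) - q : ℝ) * (π * l / N) = l * (2 * π) - q * (π * l / N) by
    push_cast; field_simp, Real.sin_nat_mul_two_pi_sub]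

lemma weightedSineSum_self (N : ℕ) : weightedSineSum N N = 0 := by
  have := weightedSineSum_two_mul_sub (N := N) (q := N) (by omega)
  rw [show 2 * N - N = N by omega] at this
  linarith

/-- Discrete minimum principle: a strictly concave sequence has no interior minimum. -/
lemma pos_of_strictConcave {G : ℕ → ℝ} {M : ℕ}
    (hG : ∀ j, j + 2 ≤ M → G j + G (j + 2) < 2 * G (j + 1)) (h0 : 0 ≤ G 0) (hM : 0 ≤ G M)
    {m : ℕ} (hm0 : 0 < m) (hmM : m < M) : 0 < G m := by
  by_contra! hm
  obtain ⟨k, hk, hmin⟩ := (Icc 1 (M - 1)).exists_min_image G ⟨m, by simp only [mem_Icc]; omega⟩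
  have hle : ∀ i ≤ M, G k ≤ G i := by
    intro i hi
    have hkm := hmin m (by simp only [mem_Icc]; omega)
    rcases Nat.eq_zero_or_pos i with rfl | hi0
    · linarith
    rcases hi.eq_or_lt with rfl | hiM
    · linarith
    · exact hmin i (by simp only [mem_Icc]; omega)
  rw [mem_Icc] at hk
  have hk' := hG (k - 1) (by omega)
  rw [show k - 1 + 1 = k by omega, show k - 1 + 2 = k + 1 by omega] at hk'
  linarith [hle (k - 1) (by omega), hle (k + 1) (by omega)]

lemma weightedSineSum_pos {N q : ℕ} (hq : Odd q) (hqN : q < N) : 0 < weightedSineSum N q := by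
  obtain ⟨m, rfl⟩ := hq
  obtain ⟨h, hN⟩ := Nat.even_or_odd' N
  set G : ℕ → ℝ := fun j => weightedSineSum N (2 * j + 1)
  have hG0 : 0 < G 0 := weightedSineSum_one_pos (by omega)
  have hconcave : ∀ j, j + 2 ≤ h → G j + G (j + 2) < 2 * G (j + 1) := by
    intro j hj
    have hsum := weightedSineSum_add_weightedSineSum_add_four N (2 * j + 1)
    have hpos := sineSum_pos (N := N) (c := 2 * j + 1 + 2) ⟨j + 1, by ring⟩ (by omega)
    simp only [G, show 2 * (j + 2) + 1 = 2 * j + 1 + 4 by ring,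
      show 2 * (j + 1) + 1 = 2 * j + 1 + 2 by ring]
    linarith
  suffices ∀ j < h, 0 < G j from this m (by omega)
  intro j hj
  rcases Nat.eq_zero_or_pos j with rfl | hj0
  · exact hG0
  rcases hN with hN | hN
  · have hGh : G h = -G (h - 1) := by
      have := weightedSineSum_two_mul_sub (N := N) (q := 2 * (h - 1) + 1) (by omega)
      rwa [show 2 * N - (2 * (h - 1) + 1) = 2 * h + 1 by omega] at this
    have hlast : 0 < G (h - 1) := by
      by_contra! hneg
      have := pos_of_strictConcave hconcave hG0.le (by linarith) (m := h - 1) (by omega) (by omega)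
      linarith
    rcases (show j < h - 1 ∨ j = h - 1 by omega) with hj' | rfl
    · exact pos_of_strictConcave (fun i hi => hconcave i (by omega)) hG0.le hlast.le hj0 hj'
    · exact hlast
  · have hGh : G h = 0 := by
      simp only [G, ← hN, weightedSineSum_self]
    exact pos_of_strictConcave hconcave hG0.le hGh.ge hj0 hj

lemma weightedSineSum_ne_zero {N q : ℕ} (hq : Odd q) (hq2N : q < 2 * N) (hqN : q ≠ N) :
    weightedSineSum N q ≠ 0 := by
  rcases hqN.lt_or_gt with hlt | hgt
  · exact (weightedSineSum_pos hq hlt).ne'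
  · have hanti := weightedSineSum_two_mul_sub (N := N) (q := 2 * N - q) (by omega)
    rw [Nat.sub_sub_self hq2N.le] at hanti
    have hodd : Odd (2 * N - q) := by
      obtain ⟨k, rfl⟩ := hq; exact ⟨N - k - 1, by omega⟩
    linarith [weightedSineSum_pos (N := N) hodd (by omega)]

lemma sum_cos_div_sin_sq_eq_zero {N q : ℕ} (hq : Odd q) :
    ∑ l ∈ Ico 1 N, Real.cos (q * (π * l / N)) / Real.sin (π * l / N) ^ 2 = 0 := by
  set f : ℕ → ℝ := fun l => Real.cos (q * (π * l / N)) / Real.sin (π * l / N) ^ 2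
  have hanti : ∀ l ∈ Ico 1 N, f (N - l) = -f l := by
    intro l hl
    have hN : (N : ℝ) ≠ 0 := by
      rw [mem_Ico] at hl; exact_mod_cast ((zero_lt_one.trans_le hl.1).trans hl.2).ne'
    have hθ : π * ((N - l : ℕ) : ℝ) / N = π - π * l / N := by
      rw [Nat.cast_sub (mem_Ico.mp hl).2.le]; field_simp
    simp only [f, hθ, Real.sin_pi_sub, mul_sub, Real.cos_nat_mul_pi_sub, hq.neg_one_pow]
    ring
  have hreflect : ∑ l ∈ Ico 1 N, f (N - l) = ∑ l ∈ Ico 1 N, f l := by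
    rw [sum_Ico_reflect f 1 N.le_succ]; simp
  rw [sum_congr rfl hanti, sum_neg_distrib] at hreflect
  linarith

lemma one_sub_exp_two_mul_I (θ : ℝ) :
    1 - exp (2 * θ * I) = -2 * I * Real.sin θ * exp (θ * I) := by
  have hinv : exp (θ * I) * exp (-θ * I) = 1 := by rw [← Complex.exp_add]; simp
  rw [show (2 : ℂ) * θ * I = θ * I + θ * I by ring, Complex.exp_add, ofReal_sin, Complex.sin]
  linear_combination (-1) * hinv + (exp (-θ * I) - exp (θ * I)) * exp (θ * I) * I_sq

lemma norm_one_sub_exp_two_mul_I (θ : ℝ) : ‖1 - exp (2 * θ * I)‖ = 2 * |Real.sin θ| := by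
  rw [one_sub_exp_two_mul_I, norm_mul, norm_exp_ofReal_mul_I, norm_mul, norm_mul, norm_neg,
    norm_I, norm_real, Real.norm_eq_abs]
  norm_num

lemma circulant_term_eq {θ : ℝ} (hθ : 0 < Real.sin θ) (m : ℕ) :
    (1 - exp (2 * θ * I)) / ‖1 - exp (2 * θ * I)‖ ^ 3 * exp (2 * θ * I) ^ m
      = ((Real.sin ((2 * m + 1) * θ) / (4 * Real.sin θ ^ 2) : ℝ) : ℂ)
        - I * ((Real.cos ((2 * m + 1) * θ) / (4 * Real.sin θ ^ 2) : ℝ) : ℂ) := by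
  have hexp : exp (θ * I) * exp (2 * θ * I) ^ m
      = Real.cos ((2 * m + 1) * θ) + Real.sin ((2 * m + 1) * θ) * I := by
    rw [← Complex.exp_nat_mul, ← Complex.exp_add, ofReal_cos, ofReal_sin, ← exp_mul_I]
    push_cast
    ring_nf
  have hs : (Real.sin θ : ℂ) ≠ 0 := ofReal_ne_zero.mpr hθ.ne'
  rw [norm_one_sub_exp_two_mul_I, abs_of_pos hθ, one_sub_exp_two_mul_I,
    show ∀ a b c d e f : ℂ, a * b * c * d / e * f = a * b * c * (d * f) / e by intros; ring, hexp]
  simp only [ofReal_div, ofReal_mul, ofReal_pow, ofReal_ofNat]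
  field_simp
  linear_combination (-4 * Real.sin ((2 * m + 1) * θ)) * I_sq

lemma sum_circulant_eq_weightedSineSum (N m : ℕ) :
    ∑ l ∈ Ico 1 N, (1 - exp (2 * π * I / N) ^ l) / ‖1 - exp (2 * π * I / N) ^ l‖ ^ 3
        * exp (2 * π * I / N) ^ (m * l)
      = ((weightedSineSum N (2 * m + 1) / 4 : ℝ) : ℂ) := by
  have hpow : ∀ l : ℕ, exp (2 * π * I / N) ^ l = exp (2 * (π * l / N : ℝ) * I) := by
    intro l
    rw [← Complex.exp_nat_mul]
    push_cast
    ring_nf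
  have hterm : ∀ l ∈ Ico 1 N,
      (1 - exp (2 * π * I / N) ^ l) / ‖1 - exp (2 * π * I / N) ^ l‖ ^ 3
          * exp (2 * π * I / N) ^ (m * l)
        = ((Real.sin ((2 * m + 1 : ℕ) * (π * l / N)) / Real.sin (π * l / N) ^ 2 / 4 : ℝ) : ℂ)
          - I * ((Real.cos ((2 * m + 1 : ℕ) * (π * l / N)) / Real.sin (π * l / N) ^ 2 / 4 : ℝ)
            : ℂ) := by
    intro l hl
    rw [mul_comm m l, pow_mul, hpow, circulant_term_eq (sin_pi_mul_div_pos hl)]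
    push_cast
    ring
  rw [sum_congr rfl hterm, sum_sub_distrib, ← mul_sum, ← ofReal_sum, ← ofReal_sum, ← sum_div,
    ← sum_div, sum_cos_div_sin_sq_eq_zero ⟨m, rfl⟩]
  simp [weightedSineSum]

/-- `lam k` is the paper's `∑_{j ≠ 1} A_{1,j} ω^{(k-1)(j-1)}` after the substitution `l = j - 1`. -/
theorem circulant_eigenvalues_nonzero_general (N : ℕ)
    (ω : ℂ) (hω : ω = Complex.exp (2 * Real.pi * Complex.I / N))
    (lam : ℕ → ℂ)
    (hlam : ∀ k, lam k = ∑ l ∈ Finset.Ico 1 N,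
        ((1 - ω ^ l) / (‖1 - ω ^ l‖)^3) * ω ^ ((k - 1) * l)) :
    ∀ k, 1 ≤ k → k ≤ N - 1 →
      ((Odd N ∧ k = (N + 1) / 2) → lam k = 0) ∧
      (¬(Odd N ∧ k = (N + 1) / 2) → lam k ≠ 0) := by
  intro k hk1 hkN
  have hlamk : lam k = ((weightedSineSum N (2 * (k - 1) + 1) / 4 : ℝ) : ℂ) := by
    rw [hlam, hω, sum_circulant_eq_weightedSineSum]
  have hmiddle : Odd N ∧ k = (N + 1) / 2 ↔ 2 * (k - 1) + 1 = N := by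
    constructor
    · rintro ⟨⟨t, rfl⟩, rfl⟩; omega
    · intro h; exact ⟨⟨k - 1, h.symm⟩, by omega⟩
  rw [hmiddle, hlamk]
  refine ⟨fun hq => ?_, fun hq => ?_⟩
  · rw [hq, weightedSineSum_self]
    simp
  · have := weightedSineSum_ne_zero (N := N) ⟨k - 1, rfl⟩ (by omega) hq
    exact_mod_cast div_ne_zero this four_ne_zero

/-- For `N ≥ 4`, the circulant-matrix eigenvalues
`λ_k = ∑_{l=1}^{N-1} (1 − ω^l)/|1 − ω^l|³ · ω^{(k−1)l}` (where `ω = e^{2πi/N}`, this is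
`∑_{j≠1} A_{1,j} ω^{(k−1)(j−1)}` after the substitution `l = j − 1`) satisfy
`λ_k ≠ 0` for all `k ∈ {1,…,N−1}`, except that `λ_{(N+1)/2} = 0` when `N` is odd. -/
theorem circulant_eigenvalues_nonzero (N : ℕ) (hN : 4 ≤ N)
    (ω : ℂ) (hω : ω = Complex.exp (2 * Real.pi * Complex.I / N))
    (lam : ℕ → ℂ)
    (hlam : ∀ k, lam k = ∑ l ∈ Finset.Ico 1 N,
        ((1 - ω ^ l) / (‖1 - ω ^ l‖)^3) * ω ^ ((k - 1) * l)) :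
    ∀ k, 1 ≤ k → k ≤ N - 1 →
      ((Odd N ∧ k = (N + 1) / 2) → lam k = 0) ∧
      (¬(Odd N ∧ k = (N + 1) / 2) → lam k ≠ 0) :=
  circulant_eigenvalues_nonzero_general N ω hω lam hlam
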